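/- Every graph G with feedback vertex number at most 1 and girth at least 5 admits a 2-colouring in which every monochromatic component has at most 2 vertices. -/

import Mathlib

open SimpleGraph Set

/-- The monochromatic subgraph of `G` under colouring `C`. -/
def monoSubgraph {V α : Type*} (G : SimpleGraph V) (C : V → α) : SimpleGraph V where
  Adj a b := G.Adj a b ∧ C a = C b
  symm := ⟨fun _ _ h => ⟨h.1.symm, h.2.symm⟩⟩
  loopless := ⟨fun a h => G.irrefl h.1⟩

/-- The colouring `C` of `G` has defect at most `d`: every monochromatic component has
maximum degree at most `d` (equivalently, every vertex has at most `d` neighbours of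
its own colour). -/
def HasDefect {V α : Type*} (G : SimpleGraph V) (C : V → α) (d : ℕ) : Prop :=
  ∀ v, {w | G.Adj v w ∧ C w = C v}.ncard ≤ d

/-- The colouring `C` of `G` has clustering at most `c`: every monochromatic component
has at most `c` vertices. -/
def HasClustering {V α : Type*} (G : SimpleGraph V) (C : V → α) (c : ℕ) : Prop :=
  ∀ v, {w | (monoSubgraph G C).Reachable v w}.ncard ≤ c

/-- Feedback vertex number at most `k`. -/
def FvnLE {V : Type*} (G : SimpleGraph V) (k : ℕ) : Prop :=
  ∃ A : Set V, A.Finite ∧ A.ncard ≤ k ∧ (G.induce Aᶜ).IsAcyclic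

/-- `H` is a minor of `G`, via branch sets. -/
def IsMinorOf {W V : Type*} (H : SimpleGraph W) (G : SimpleGraph V) : Prop :=
  ∃ B : W → Set V,
    (∀ w, (B w).Nonempty) ∧
    (Pairwise fun w w' => Disjoint (B w) (B w')) ∧
    (∀ w, (G.induce (B w)).Connected) ∧
    (∀ w w', H.Adj w w' → ∃ a ∈ B w, ∃ b ∈ B w', G.Adj a b)

/-- Treedepth at most `k`: there is a forest (ancestor) partial order `r` of height
at most `k` such that the endpoints of every edge are comparable. -/
def TreedepthLE {V : Type*} (G : SimpleGraph V) (k : ℕ) : Prop :=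
  ∃ r : V → V → Prop,
    (∀ v, r v v) ∧
    (∀ a b c, r a b → r b c → r a c) ∧
    (∀ a b, r a b → r b a → a = b) ∧
    (∀ v a b, r a v → r b v → r a b ∨ r b a) ∧
    (∀ v, {u | r u v}.Finite ∧ {u | r u v}.ncard ≤ k) ∧
    (∀ a b, G.Adj a b → r a b ∨ r b a)

/-- Pathwidth at most `k`, via path decompositions. -/
def PathwidthLE {V : Type*} (G : SimpleGraph V) (k : ℕ) : Prop :=
  ∃ (n : ℕ) (B : Fin n → Set V),
    (∀ v, ∃ i, v ∈ B i) ∧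
    (∀ a b, G.Adj a b → ∃ i, a ∈ B i ∧ b ∈ B i) ∧
    (∀ i j l : Fin n, i ≤ j → j ≤ l → ∀ v, v ∈ B i → v ∈ B l → v ∈ B j) ∧
    (∀ i, (B i).ncard ≤ k + 1)

/-- `w` is 2-reachable from `v` with respect to the order `r`. -/
def TwoReach {V : Type*} (G : SimpleGraph V) (r : V → V → Prop) (v w : V) : Prop :=
  w = v ∨ (r w v ∧ (G.Adj v w ∨ ∃ u, r v u ∧ u ≠ v ∧ G.Adj v u ∧ G.Adj u w))

/-- The 2-strong colouring number `col₂(G)`. -/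
noncomputable def col2 {V : Type*} (G : SimpleGraph V) : ℕ :=
  sInf {m | ∃ r : V → V → Prop, IsLinearOrder V r ∧ ∀ v, {w | TwoReach G r v w}.ncard ≤ m}

/-- `G` contains a complete bipartite subgraph `K_{s,t}`. -/
def HasKstSubgraph {V : Type*} (G : SimpleGraph V) (s t : ℕ) : Prop :=
  ∃ (A B : Finset V), Disjoint A B ∧ A.card = s ∧ B.card = t ∧
    ∀ a ∈ A, ∀ b ∈ B, G.Adj a b

/-- `x` is a prefix of `y`, as nodes of the complete `d`-ary tree of height `n`. -/
def SeqPrefix {n d : ℕ} (x y : Σ i : Fin n, Fin (i : ℕ) → Fin d) : Prop :=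
  ∃ h : (x.1 : ℕ) ≤ (y.1 : ℕ), ∀ a : Fin (x.1 : ℕ), y.2 (Fin.castLE h a) = x.2 a

/-- The graph `H^(d)`, on the nodes of the complete `d`-ary tree of height `n`:
on each root–leaf path `(x_1, …, x_n)`, `x_i x_j` is an edge iff `v_i v_j ∈ E(H)`. -/
def HdGraph (n d : ℕ) (H : SimpleGraph (Fin n)) :
    SimpleGraph (Σ i : Fin n, Fin (i : ℕ) → Fin d) where
  Adj x y := H.Adj x.1 y.1 ∧ (SeqPrefix x y ∨ SeqPrefix y x)
  symm := ⟨fun _ _ h => ⟨h.1.symm, h.2.symm⟩⟩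
  loopless := ⟨fun x h => H.irrefl h.1⟩

/-- Planarity, via Wagner's characterisation: no `K₅` minor and no `K_{3,3}` minor. -/
def IsPlanarWagner {V : Type*} (G : SimpleGraph V) : Prop :=
  ¬ IsMinorOf (⊤ : SimpleGraph (Fin 5)) G ∧
  ¬ IsMinorOf (completeBipartiteGraph (Fin 3) (Fin 3)) G

/-- The independence number. -/
noncomputable def indepNum {V : Type*} (H : SimpleGraph V) : ℕ :=
  sSup {m | ∃ s : Finset V, s.card = m ∧ ∀ a ∈ s, ∀ b ∈ s, a ≠ b → ¬ H.Adj a b}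

/-!
Delete a vertex `a` whose removal leaves a forest `F`, and let `S` be its neighbourhood. Girth at
least 5 makes `S` independent and gives every vertex of `F` at most one neighbour in `S`. Colour
`a` with `0`, and colour `F` by re-attaching its leaves one at a time: a leaf in `S` gets colour
`1`, any other leaf the colour opposite to its neighbour. Then every monochromatic edge meets `S`,
so a vertex outside `S` has at most one monochromatic neighbour, and so does a vertex of `S`: the
one it was attached to, since later leaves hanging from it lie outside `S`. A colouring of
maximum monochromatic degree 1 has monochromatic components of at most 2 vertices.
-/

namespace SimpleGraph

variable {V : Type*} {G : SimpleGraph V}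

lemma not_adj_of_four_le_egirth (h : 4 ≤ G.egirth) {a b c : V} (hab : G.Adj a b)
    (hbc : G.Adj b c) : ¬ G.Adj c a := fun hca => by
  have hcyc : (Walk.cons hab (Walk.cons hbc (Walk.cons hca Walk.nil))).IsCycle := by
    simp [Walk.cons_isCycle_iff, hab.ne, hbc.ne, hca.ne, hab.ne', hca.ne']
  exact absurd (le_egirth.mp h a _ hcyc) (by norm_num)

lemma eq_of_five_le_egirth (h : 5 ≤ G.egirth) {a b c d : V} (hab : G.Adj a b)
    (hbc : G.Adj b c) (hcd : G.Adj c d) (hda : G.Adj d a) (hac : a ≠ c) : b = d := by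
  by_contra hbd
  have hcyc : (Walk.cons hab (Walk.cons hbc (Walk.cons hcd (Walk.cons hda Walk.nil)))).IsCycle := by
    simp [Walk.cons_isCycle_iff, hab.ne, hbc.ne, hcd.ne, hda.ne, hab.ne', hda.ne',
      hac, hac.symm, hbd]
  exact absurd (le_egirth.mp h a _ hcyc) (by norm_num)

lemma IsAcyclic.exists_adj_forall_adj_eq [Finite V] (hG : G.IsAcyclic) (hne : G ≠ ⊥) :
    ∃ v u, G.Adj v u ∧ ∀ w, G.Adj v w → w = u := by
  obtain ⟨x, y, hxy⟩ := ne_bot_iff_exists_adj.mp hne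
  have : Nonempty V := ⟨x⟩
  obtain ⟨v, u, p, hp, hmax⟩ := Walk.exists_isPath_forall_isPath_length_le_length G
  have hnil : ¬ p.Nil := fun hnil => by
    have := hmax _ _ _ (Walk.IsPath.of_adj hxy)
    simp [Walk.length_eq_zero_iff.mpr hnil] at this
  refine ⟨v, p.snd, p.adj_snd hnil, fun w hvw => hG.eq_snd_of_adj_start hp hvw ?_⟩
  by_contra hw
  have := hmax _ _ _ (hp.cons (p := p) (h := hvw.symm) hw)
  simp at this

structure IsAnchoredColouring (F : SimpleGraph V) (S : Set V) (c : V → Fin 2) : Prop where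
  eq_one : ∀ s ∈ S, c s = 1
  mem_or_mem_of_adj : ∀ x y, F.Adj x y → c x = c y → x ∈ S ∨ y ∈ S
  subsingleton : ∀ s ∈ S, {y | F.Adj s y ∧ c y = c s}.Subsingleton

variable {F : SimpleGraph V} {S : Set V}

lemma IsAnchoredColouring.of_bot : IsAnchoredColouring (⊥ : SimpleGraph V) S (fun _ => 1) :=
  ⟨fun _ _ => rfl, fun _ _ h => h.elim, fun _ _ _ hx => hx.1.elim⟩

open scoped Classical in
lemma IsAnchoredColouring.extend_leaf (hS : ∀ x ∈ S, ∀ y ∈ S, ¬ F.Adj x y) {v u : V}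
    (hvu : F.Adj v u) (hleaf : ∀ w, F.Adj v w → w = u) {c : V → Fin 2}
    (hc : IsAnchoredColouring (F.deleteIncidenceSet v) S c) :
    IsAnchoredColouring F S (Function.update c v (if v ∈ S then 1 else 1 - c u)) := by
  set c' := Function.update c v (if v ∈ S then 1 else 1 - c u)
  have hc'v : c' v = if v ∈ S then 1 else 1 - c u := Function.update_self ..
  have hc'_of_ne {x : V} (hx : x ≠ v) : c' x = c x := Function.update_of_ne hx ..
  have hc'u : c' u = c u := hc'_of_ne hvu.ne'
  have hunchanged {x y : V} (hxy : F.Adj x y) (hx : x ≠ v) (hy : y ≠ v) :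
      (F.deleteIncidenceSet v).Adj x y ∧ c' x = c x ∧ c' y = c y :=
    ⟨(deleteIncidenceSet_adj ..).mpr ⟨hxy, hx, hy⟩, hc'_of_ne hx, hc'_of_ne hy⟩
  have hnew (hmono : c' v = c' u) : v ∈ S := by
    by_contra hv
    rw [hc'v, if_neg hv, hc'u] at hmono
    omega
  refine ⟨fun s hs => ?_, fun x y hxy hmono => ?_, fun s hs => ?_⟩
  · rcases eq_or_ne s v with rfl | hsv
    · rw [hc'v, if_pos hs]
    · rw [hc'_of_ne hsv, hc.eq_one s hs]
  · rcases eq_or_ne x v with rfl | hxv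
    · exact .inl (hnew (hleaf y hxy ▸ hmono))
    rcases eq_or_ne y v with rfl | hyv
    · exact .inr (hnew (hleaf x hxy.symm ▸ hmono.symm))
    obtain ⟨hxy', hx, hy⟩ := hunchanged hxy hxv hyv
    exact hc.mem_or_mem_of_adj x y hxy' (hx ▸ hy ▸ hmono)
  rcases eq_or_ne s v with rfl | hsv
  · exact Set.subsingleton_singleton.anti fun y hy => hleaf y hy.1
  refine (hc.subsingleton s hs).anti fun y ⟨hsy, hmono⟩ => ?_
  have hyv : y ≠ v := by
    rintro rfl
    obtain rfl := hleaf s hsy.symm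
    exact hS _ (hnew hmono) _ hs hvu
  obtain ⟨hsy', hs', hy⟩ := hunchanged hsy hsv hyv
  exact ⟨hsy', hs' ▸ hy ▸ hmono⟩

lemma IsAcyclic.exists_isAnchoredColouring [Finite V] (hF : F.IsAcyclic)
    (hS : ∀ x ∈ S, ∀ y ∈ S, ¬ F.Adj x y) : ∃ c, IsAnchoredColouring F S c := by
  induction F using WellFoundedLT.induction with
  | _ F ih =>
  rcases eq_or_ne F ⊥ with rfl | hne
  · exact ⟨_, .of_bot⟩
  obtain ⟨v, u, hvu, hleaf⟩ := hF.exists_adj_forall_adj_eq hne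
  have hlt : F.deleteIncidenceSet v < F :=
    lt_of_le_not_ge (F.deleteIncidenceSet_le v) fun hle => by
      simpa [deleteIncidenceSet_adj] using hle hvu
  obtain ⟨c, hc⟩ := ih _ hlt (hF.anti hlt.le) fun x hx y hy h => hS x hx y hy (hlt.le h)
  exact ⟨_, hc.extend_leaf hS hvu hleaf⟩

lemma IsAnchoredColouring.hasDefect_one {c : V → Fin 2}
    (hc : IsAnchoredColouring F S c) (hS : ∀ x, {y | F.Adj x y ∧ y ∈ S}.Subsingleton) :
    HasDefect F c 1 := by
  intro x
  have hsub : {y | F.Adj x y ∧ c y = c x}.Subsingleton := by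
    by_cases hx : x ∈ S
    · exact hc.subsingleton x hx
    · refine (hS x).anti fun y ⟨hxy, hmono⟩ => ⟨hxy, ?_⟩
      exact (hc.mem_or_mem_of_adj x y hxy hmono.symm).resolve_left hx
  have := hsub.finite.to_subtype
  exact Set.ncard_le_one_iff_subsingleton.mpr hsub

lemma reachable_eq_or_adj_of_subsingleton (h : ∀ v, (G.neighborSet v).Subsingleton) {v w : V}
    (hvw : G.Reachable v w) : v = w ∨ G.Adj v w := by
  obtain ⟨p⟩ := hvw
  induction p with
  | nil => exact .inl rfl
  | cons huv _ ih =>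
    rcases ih with rfl | hadj
    · exact .inr huv
    · exact .inl (h _ huv.symm hadj)

lemma ncard_reachable_le_two_of_subsingleton [Finite V]
    (h : ∀ v, (G.neighborSet v).Subsingleton) (v : V) : {w | G.Reachable v w}.ncard ≤ 2 :=
  calc {w | G.Reachable v w}.ncard
      ≤ (insert v (G.neighborSet v)).ncard :=
        Set.ncard_le_ncard (fun w hw => reachable_eq_or_adj_of_subsingleton h hw |>.imp Eq.symm id)
    _ ≤ (G.neighborSet v).ncard + 1 := Set.ncard_insert_le _ _
    _ ≤ 2 := by
      have := (h v).finite.to_subtype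
      have := Set.ncard_le_one_iff_subsingleton.mpr (h v)
      omega

end SimpleGraph

lemma HasDefect.hasClustering_two {V α : Type*} [Finite V] {G : SimpleGraph V} {C : V → α}
    (hC : HasDefect G C 1) : HasClustering G C 2 :=
  ncard_reachable_le_two_of_subsingleton fun v =>
    (Set.ncard_le_one_iff_subsingleton.mp (hC v)).anti fun _ ⟨hvw, hmono⟩ => ⟨hvw, hmono.symm⟩

lemma HasDefect.of_induce_compl_singleton {V α : Type*} {G : SimpleGraph V} {C : V → α} {a : V}
    {d : ℕ} (hC : HasDefect (G.induce {a}ᶜ) (C ∘ Subtype.val) d)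
    (ha : ∀ w, G.Adj a w → C w ≠ C a) : HasDefect G C d := by
  intro v
  rcases eq_or_ne v a with rfl | hva
  · have hmono : {w | G.Adj v w ∧ C w = C v} = ∅ :=
      Set.eq_empty_of_forall_notMem fun w hw => ha w hw.1 hw.2
    rw [hmono, Set.ncard_empty]
    exact d.zero_le
  have hmono : {w | G.Adj v w ∧ C w = C v} = Subtype.val ''
      {w : ({a}ᶜ : Set V) | (G.induce {a}ᶜ).Adj ⟨v, hva⟩ w ∧ C w = C v} := by
    ext w
    refine ⟨fun ⟨hvw, hmono⟩ => ⟨⟨w, fun hwa => ?_⟩, ⟨hvw, hmono⟩, rfl⟩, ?_⟩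
    · exact ha v (hwa ▸ hvw.symm) (hwa ▸ hmono.symm)
    · rintro ⟨w, hw, rfl⟩
      exact hw
  rw [hmono, Set.ncard_image_of_injective _ Subtype.val_injective]
  exact hC ⟨v, hva⟩

lemma FvnLE.exists_isAcyclic_induce_compl_singleton {V : Type*} [Nonempty V] {G : SimpleGraph V}
    (h : FvnLE G 1) : ∃ a, (G.induce {a}ᶜ).IsAcyclic := by
  obtain ⟨A, hA, hcard, hacyc⟩ := h
  obtain ⟨a, haA⟩ : ∃ a, A ⊆ {a} := by
    rcases (Set.ncard_le_one_iff_eq hA).mp hcard with rfl | ⟨a, rfl⟩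
    · exact ⟨Classical.arbitrary V, Set.empty_subset _⟩
    · exact ⟨a, subset_rfl⟩
  exact ⟨a, hacyc.embedding (G.induceHomOfLE (Set.compl_subset_compl.mpr haA))⟩

/-- every graph with feedback vertex number at most 1 and girth at least 5
is 2-colourable with clustering 2. -/
theorem stmt4 {V : Type*} [Fintype V] (G : SimpleGraph V)
    (h1 : FvnLE G 1) (h2 : (5 : ℕ∞) ≤ G.egirth) :
    ∃ C : V → Fin 2, HasClustering G C 2 := by
  classical
  rcases isEmpty_or_nonempty V with hV | hV
  · exact ⟨isEmptyElim, isEmptyElim⟩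
  obtain ⟨a, hF⟩ := h1.exists_isAcyclic_induce_compl_singleton
  let S : Set ({a}ᶜ : Set V) := {x | G.Adj a x}
  have hSind : ∀ x ∈ S, ∀ y ∈ S, ¬ (G.induce {a}ᶜ).Adj x y := fun x hx y hy hxy =>
    not_adj_of_four_le_egirth (le_trans (by decide) h2) hx hxy hy.symm
  have hSnbr : ∀ x, {y | (G.induce {a}ᶜ).Adj x y ∧ y ∈ S}.Subsingleton :=
    fun x _ ⟨hxy, hy⟩ _ ⟨hxz, hz⟩ =>
      Subtype.ext (eq_of_five_le_egirth h2 hy hxy.symm hxz hz.symm (Ne.symm x.2))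
  obtain ⟨c, hc⟩ := hF.exists_isAnchoredColouring hSind
  let C : V → Fin 2 := fun v => if h : v = a then 0 else c ⟨v, h⟩
  have hCc : C ∘ Subtype.val = c := by
    funext x
    exact dif_neg x.2
  refine ⟨C, HasDefect.hasClustering_two (.of_induce_compl_singleton (a := a) ?_ fun w haw => ?_)⟩
  · rw [hCc]
    exact hc.hasDefect_one hSnbr
  · have hwa : w ≠ a := haw.ne'
    simp [C, hwa, hc.eq_one ⟨w, hwa⟩ haw]
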